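/- Assume (A1) and (A2). Let M be a polytopal menu with M ⊆ M_NR. Then M is Pareto-optimal if and only if M^− = M_NSR^−, i.e., M has the same set of u_L-minimizing points as the no-swap-regret menu. -/

import Mathlib

open Finset

noncomputable section

/-- The product CSP `x ⊗ y`. -/
def prodCSP {m n : ℕ} (x : Fin m → ℝ) (y : Fin n → ℝ) : Fin m × Fin n → ℝ :=
  fun p => x p.1 * y p.2

/-- The `j`-th vertex `e_j` of a simplex. -/
def pureVec {k : ℕ} (j : Fin k) : Fin k → ℝ := fun j' => if j' = j then 1 else 0

/-- Linear extension of a payoff to CSPs. -/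
def linCSP {m n : ℕ} (u : Fin m → Fin n → ℝ) (φ : Fin m × Fin n → ℝ) : ℝ :=
  ∑ p : Fin m × Fin n, φ p * u p.1 p.2

/-- Payoff the learner would get by always deviating to the pure action `j'`. -/
def devCSP {m n : ℕ} (u : Fin m → Fin n → ℝ) (φ : Fin m × Fin n → ℝ) (j' : Fin n) : ℝ :=
  ∑ p : Fin m × Fin n, φ p * u p.1 j'

/-- Bilinear extension of a payoff to mixed strategies. -/
def mixPay {m n : ℕ} (u : Fin m → Fin n → ℝ) (x : Fin m → ℝ) (y : Fin n → ℝ) : ℝ :=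
  ∑ i, ∑ j, x i * y j * u i j

/-- Pure best responses of the learner to the optimizer mixed strategy `x`. -/
def BRL {m n : ℕ} (u : Fin m → Fin n → ℝ) (x : Fin m → ℝ) : Set (Fin n) :=
  {j | ∀ j' : Fin n, (∑ i, x i * u i j') ≤ ∑ i, x i * u i j}

/-- A CSP is no-regret. -/
def NoRegret {m n : ℕ} (u : Fin m → Fin n → ℝ) (φ : Fin m × Fin n → ℝ) : Prop :=
  ∀ j' : Fin n, devCSP u φ j' ≤ linCSP u φ

/-- A CSP is no-swap-regret. -/
def NoSwapRegret {m n : ℕ} (u : Fin m → Fin n → ℝ) (φ : Fin m × Fin n → ℝ) : Prop :=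
  ∀ j j' : Fin n, (∑ i, φ (i, j) * u i j') ≤ ∑ i, φ (i, j) * u i j

/-- The no-regret menu: all no-regret CSPs. -/
def MNR {m n : ℕ} (u : Fin m → Fin n → ℝ) : Set (Fin m × Fin n → ℝ) :=
  {φ | φ ∈ stdSimplex ℝ (Fin m × Fin n) ∧ NoRegret u φ}

/-- The no-swap-regret menu: all no-swap-regret CSPs. -/
def MNSR {m n : ℕ} (u : Fin m → Fin n → ℝ) : Set (Fin m × Fin n → ℝ) :=
  {φ | φ ∈ stdSimplex ℝ (Fin m × Fin n) ∧ NoSwapRegret u φ}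

/-- A menu: a closed convex subset of the simplex of CSPs such that every optimizer
mixed strategy has some product response inside the set. -/
def IsMenu {m n : ℕ} (M : Set (Fin m × Fin n → ℝ)) : Prop :=
  IsClosed M ∧ Convex ℝ M ∧ M ⊆ stdSimplex ℝ (Fin m × Fin n) ∧
    ∀ x ∈ stdSimplex ℝ (Fin m), ∃ y ∈ stdSimplex ℝ (Fin n), prodCSP x y ∈ M

/-- The learner's value when the optimizer with payoff `uO` picks their favorite point
of the menu `M`, breaking ties in the learner's favor. -/
def VL {m n : ℕ} (uL uO : Fin m → Fin n → ℝ) (M : Set (Fin m × Fin n → ℝ)) : ℝ :=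
  sSup (linCSP uL '' {φ ∈ M | ∀ ψ ∈ M, linCSP uO ψ ≤ linCSP uO φ})

/-- `M'` Pareto-dominates `M` (for the learner payoff `uL`). -/
def ParetoDominates {m n : ℕ} (uL : Fin m → Fin n → ℝ)
    (M' M : Set (Fin m × Fin n → ℝ)) : Prop :=
  (∀ uO : Fin m → Fin n → ℝ, VL uL uO M ≤ VL uL uO M') ∧
    ∃ uO : Fin m → Fin n → ℝ, VL uL uO M < VL uL uO M'

/-- A menu is Pareto-optimal if it is a menu and no menu Pareto-dominates it. -/
def ParetoOptimal {m n : ℕ} (uL : Fin m → Fin n → ℝ) (M : Set (Fin m × Fin n → ℝ)) : Prop :=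
  IsMenu M ∧ ∀ M' : Set (Fin m × Fin n → ℝ), IsMenu M' → ¬ ParetoDominates uL M' M

/-- (A2): no weakly dominated learner actions. -/
def A2cond {m n : ℕ} (u : Fin m → Fin n → ℝ) : Prop :=
  ∀ j : Fin n, (∃ x ∈ stdSimplex ℝ (Fin m), j ∈ BRL u x) →
    ∃ x' ∈ stdSimplex ℝ (Fin m), BRL u x' = {j}

/-- `U^-(M)`: the minimal learner utility over `M`. -/
def UminusVal {m n : ℕ} (u : Fin m → Fin n → ℝ) (M : Set (Fin m × Fin n → ℝ)) : ℝ :=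
  sInf (linCSP u '' M)

/-- `U^+(M)`: the maximal learner utility over `M`. -/
def UplusVal {m n : ℕ} (u : Fin m → Fin n → ℝ) (M : Set (Fin m × Fin n → ℝ)) : ℝ :=
  sSup (linCSP u '' M)

/-- `M^-`: the set of learner-utility-minimizing points of `M`. -/
def MminusSet {m n : ℕ} (u : Fin m → Fin n → ℝ) (M : Set (Fin m × Fin n → ℝ)) :
    Set (Fin m × Fin n → ℝ) :=
  {φ ∈ M | linCSP u φ = UminusVal u M}

/-- `M^+`: the set of learner-utility-maximizing points of `M`. -/
def MplusSet {m n : ℕ} (u : Fin m → Fin n → ℝ) (M : Set (Fin m × Fin n → ℝ)) :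
    Set (Fin m × Fin n → ℝ) :=
  {φ ∈ M | linCSP u φ = UplusVal u M}

/-- The zero-sum value `U_ZS = min_x max_y u_L(x,y)`. -/
def UZSval {m n : ℕ} (u : Fin m → Fin n → ℝ) : ℝ :=
  sInf ((fun x => sSup ((fun y => mixPay u x y) '' stdSimplex ℝ (Fin n))) ''
    stdSimplex ℝ (Fin m))

/-!
`VL uL uO N` is the largest `uL`-value on the `uO`-optimal face of `N`, i.e. the right derivative
of `t ↦ U⁺(uO + t uL, N)`, where `U⁺(c, N) = max_N c` is the support function. So if a menu `M'`
weakly dominates `M`, then `t ↦ U⁺(uO + t uL, M') - U⁺(uO + t uL, M)` is nondecreasing for every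
`uO`. As `t → +∞` (resp. `-∞`) this difference is governed by the top (resp. bottom) `uL`-faces.
Under (A1) both top faces are `{φ⁺}`, which gives `M' ⊆ M`; then `M'` is a no-regret menu, hence
contains `M_NSR` by (A2), and `M⁻ = M_NSR⁻` makes the bottom faces agree too, giving `M ⊆ M'`.

Conversely, if `M⁻ ≠ M_NSR⁻` (note `M_NSR ⊆ M`), either `M` dips below the bottom of `M_NSR`
and cutting it there dominates it, or some vertex of `M` at the bottom level lies outside
`M_NSR⁻`. Then replacing the bottom of `M` by `M_NSR`, keeping the higher vertices and a point
lifted slightly from that vertex, dominates `M`, strictly so against an optimizer payoff that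
separates the vertex from `M_NSR⁻`.
-/

section

open Filter Topology

variable {m n : ℕ}

section Linearity

lemma linCSP_add (u v : Fin m → Fin n → ℝ) (φ : Fin m × Fin n → ℝ) :
    linCSP (u + v) φ = linCSP u φ + linCSP v φ := by
  simp only [linCSP, Pi.add_apply, mul_add, sum_add_distrib]

lemma linCSP_smul (t : ℝ) (u : Fin m → Fin n → ℝ) (φ : Fin m × Fin n → ℝ) :
    linCSP (t • u) φ = t * linCSP u φ := by
  simp only [linCSP, Pi.smul_apply, smul_eq_mul, mul_sum]
  exact sum_congr rfl fun _ _ => by ring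

lemma linCSP_neg (u : Fin m → Fin n → ℝ) (φ : Fin m × Fin n → ℝ) :
    linCSP (-u) φ = -linCSP u φ := by
  simpa using linCSP_smul (-1) u φ

lemma linCSP_add_smul (c d : Fin m → Fin n → ℝ) (t : ℝ) (φ : Fin m × Fin n → ℝ) :
    linCSP (c + t • d) φ = linCSP c φ + t * linCSP d φ := by
  rw [linCSP_add, linCSP_smul]

lemma isLinearMap_linCSP (u : Fin m → Fin n → ℝ) : IsLinearMap ℝ (linCSP u) where
  map_add φ ψ := by simp only [linCSP, Pi.add_apply, add_mul, sum_add_distrib]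
  map_smul t φ := by
    simp only [linCSP, Pi.smul_apply, smul_eq_mul, mul_sum]
    exact sum_congr rfl fun _ _ => by ring

lemma linCSP_smul_add_smul (u : Fin m → Fin n → ℝ) (s t : ℝ) (φ ψ : Fin m × Fin n → ℝ) :
    linCSP u (s • φ + t • ψ) = s * linCSP u φ + t * linCSP u ψ := by
  rw [(isLinearMap_linCSP u).map_add, (isLinearMap_linCSP u).map_smul,
    (isLinearMap_linCSP u).map_smul, smul_eq_mul, smul_eq_mul]

lemma continuous_linCSP (u : Fin m → Fin n → ℝ) : Continuous (linCSP u) := by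
  unfold linCSP; fun_prop

lemma linCSP_single (u : Fin m → Fin n → ℝ) (p : Fin m × Fin n) :
    linCSP u (Pi.single p 1) = u p.1 p.2 := by
  simp [linCSP, Pi.single_apply]

end Linearity

section SupportFunction

variable {N A B : Set (Fin m × Fin n → ℝ)}

lemma le_UplusVal (hN : IsCompact N) (u : Fin m → Fin n → ℝ) {φ : Fin m × Fin n → ℝ}
    (hφ : φ ∈ N) : linCSP u φ ≤ UplusVal u N :=
  le_csSup (hN.bddAbove_image (continuous_linCSP u).continuousOn) ⟨φ, hφ, rfl⟩

lemma UminusVal_le (hN : IsCompact N) (u : Fin m → Fin n → ℝ) {φ : Fin m × Fin n → ℝ}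
    (hφ : φ ∈ N) : UminusVal u N ≤ linCSP u φ :=
  csInf_le (hN.bddBelow_image (continuous_linCSP u).continuousOn) ⟨φ, hφ, rfl⟩

lemma UplusVal_le (hN : N.Nonempty) (u : Fin m → Fin n → ℝ) {b : ℝ}
    (hb : ∀ φ ∈ N, linCSP u φ ≤ b) : UplusVal u N ≤ b :=
  csSup_le (hN.image _) (by rintro - ⟨φ, hφ, rfl⟩; exact hb φ hφ)

lemma UplusVal_mono (hB : IsCompact B) (hA : A.Nonempty) (hAB : A ⊆ B)
    (u : Fin m → Fin n → ℝ) : UplusVal u A ≤ UplusVal u B :=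
  UplusVal_le hA u fun _ hφ => le_UplusVal hB u (hAB hφ)

lemma UplusVal_neg (u : Fin m → Fin n → ℝ) (N : Set (Fin m × Fin n → ℝ)) :
    UplusVal (-u) N = -UminusVal u N := by
  have : linCSP (-u) '' N = -(linCSP u '' N) := by
    ext; simp [linCSP_neg, neg_eq_iff_eq_neg]
  rw [UplusVal, UminusVal, this, Real.sSup_neg]

lemma MplusSet_neg (u : Fin m → Fin n → ℝ) (N : Set (Fin m × Fin n → ℝ)) :
    MplusSet (-u) N = MminusSet u N := by
  ext φ
  simp only [MplusSet, MminusSet, UplusVal_neg, linCSP_neg, neg_inj]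

lemma MplusSet_nonempty (hN : IsCompact N) (hne : N.Nonempty) (u : Fin m → Fin n → ℝ) :
    (MplusSet u N).Nonempty := by
  obtain ⟨φ, hφ, hmax⟩ := hN.exists_isMaxOn hne (continuous_linCSP u).continuousOn
  exact ⟨φ, hφ, le_antisymm (le_UplusVal hN u hφ) (UplusVal_le hne u hmax)⟩

lemma MminusSet_nonempty (hN : IsCompact N) (hne : N.Nonempty) (u : Fin m → Fin n → ℝ) :
    (MminusSet u N).Nonempty := by
  simpa only [MplusSet_neg] using MplusSet_nonempty hN hne (-u)

lemma isClosed_MplusSet (hN : IsClosed N) (u : Fin m → Fin n → ℝ) :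
    IsClosed (MplusSet u N) :=
  hN.inter (isClosed_eq (continuous_linCSP u) continuous_const)

lemma isCompact_MplusSet (hN : IsCompact N) (u : Fin m → Fin n → ℝ) :
    IsCompact (MplusSet u N) :=
  hN.of_isClosed_subset (isClosed_MplusSet hN.isClosed u) fun _ hφ => hφ.1

lemma isCompact_MminusSet (hN : IsCompact N) (u : Fin m → Fin n → ℝ) :
    IsCompact (MminusSet u N) := by
  simpa only [MplusSet_neg] using isCompact_MplusSet hN (-u)

lemma convex_MplusSet (hN : Convex ℝ N) (u : Fin m → Fin n → ℝ) : Convex ℝ (MplusSet u N) := by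
  intro φ hφ _ hψ s t hs ht hst
  refine ⟨hN hφ.1 hψ.1 hs ht hst, ?_⟩
  rw [linCSP_smul_add_smul, hφ.2, hψ.2, ← add_mul, hst, one_mul]

lemma convex_MminusSet (hN : Convex ℝ N) (u : Fin m → Fin n → ℝ) : Convex ℝ (MminusSet u N) := by
  simpa only [MplusSet_neg] using convex_MplusSet hN (-u)

lemma mem_MplusSet_iff (hN : IsCompact N) {u : Fin m → Fin n → ℝ} {φ : Fin m × Fin n → ℝ} :
    φ ∈ MplusSet u N ↔ φ ∈ N ∧ ∀ ψ ∈ N, linCSP u ψ ≤ linCSP u φ :=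
  ⟨fun hφ => ⟨hφ.1, fun _ hψ => hφ.2 ▸ le_UplusVal hN u hψ⟩,
    fun hφ => ⟨hφ.1, le_antisymm (le_UplusVal hN u hφ.1) (UplusVal_le ⟨φ, hφ.1⟩ u hφ.2)⟩⟩

lemma VL_eq_UplusVal_MplusSet (hN : IsCompact N) (uL uO : Fin m → Fin n → ℝ) :
    VL uL uO N = UplusVal uL (MplusSet uO N) := by
  rw [VL, UplusVal]
  congr 2
  ext φ
  exact (mem_MplusSet_iff hN).symm

lemma exists_mem_MplusSet_linCSP_eq_VL (hN : IsCompact N) (hne : N.Nonempty)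
    (uL uO : Fin m → Fin n → ℝ) :
    ∃ φ ∈ MplusSet uO N, linCSP uL φ = VL uL uO N := by
  obtain ⟨φ, hφ, hval⟩ := MplusSet_nonempty (isCompact_MplusSet hN uO)
    (MplusSet_nonempty hN hne uO) uL
  exact ⟨φ, hφ, hval.trans (VL_eq_UplusVal_MplusSet hN uL uO).symm⟩

lemma linCSP_le_VL (hN : IsCompact N) (uL : Fin m → Fin n → ℝ) {uO : Fin m → Fin n → ℝ}
    {φ : Fin m × Fin n → ℝ} (hφ : φ ∈ MplusSet uO N) : linCSP uL φ ≤ VL uL uO N :=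
  (VL_eq_UplusVal_MplusSet hN uL uO).symm ▸ le_UplusVal (isCompact_MplusSet hN uO) uL hφ

lemma VL_self (hN : IsCompact N) (hne : N.Nonempty) (u : Fin m → Fin n → ℝ) :
    VL u u N = UplusVal u N := by
  obtain ⟨φ, hφ, hval⟩ := exists_mem_MplusSet_linCSP_eq_VL hN hne u u
  rw [← hval, hφ.2]

lemma VL_neg_self (hN : IsCompact N) (hne : N.Nonempty) (u : Fin m → Fin n → ℝ) :
    VL u (-u) N = UminusVal u N := by
  obtain ⟨φ, hφ, hval⟩ := exists_mem_MplusSet_linCSP_eq_VL hN hne u (-u)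
  rw [MplusSet_neg] at hφ
  rw [← hval, hφ.2]

end SupportFunction

section SupportAlongLine

variable {N N' : Set (Fin m × Fin n → ℝ)}

lemma mul_VL_le_UplusVal_sub (hN : IsCompact N) (hne : N.Nonempty) (c d : Fin m → Fin n → ℝ)
    (a b : ℝ) :
    (b - a) * VL d (c + a • d) N ≤ UplusVal (c + b • d) N - UplusVal (c + a • d) N := by
  obtain ⟨φ, hφ, hval⟩ := exists_mem_MplusSet_linCSP_eq_VL hN hne d (c + a • d)
  have hb := le_UplusVal hN (c + b • d) hφ.1
  rw [← hφ.2, ← hval]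
  rw [linCSP_add_smul] at hb ⊢
  linarith

lemma continuous_UplusVal_add_smul (hN : IsCompact N) (c d : Fin m → Fin n → ℝ) :
    Continuous fun t : ℝ => UplusVal (c + t • d) N := by
  refine hN.continuous_sSup (f := fun (t : ℝ) (φ : Fin m × Fin n → ℝ) => linCSP (c + t • d) φ) ?_
  have : ↿(fun (t : ℝ) (φ : Fin m × Fin n → ℝ) => linCSP (c + t • d) φ) =
      fun p : ℝ × (Fin m × Fin n → ℝ) => linCSP c p.2 + p.1 * linCSP d p.2 :=
    funext fun p => linCSP_add_smul c d p.1 p.2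
  rw [this]
  have := continuous_linCSP (m := m) (n := n)
  fun_prop

/-- `VL d (uO + t d) N` is the right derivative of `t ↦ U⁺(uO + t d, N)`: compare increments
over a mesh of width `Δ`, shifted by one cell, and let `Δ → 0`. -/
lemma monotone_UplusVal_sub_of_VL_le (hN : IsCompact N) (hne : N.Nonempty) (hN' : IsCompact N')
    (hne' : N'.Nonempty) {d : Fin m → Fin n → ℝ} (hdom : ∀ c, VL d c N ≤ VL d c N')
    (uO : Fin m → Fin n → ℝ) :
    Monotone fun t : ℝ => UplusVal (uO + t • d) N' - UplusVal (uO + t • d) N := by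
  set f := fun t : ℝ => UplusVal (uO + t • d) N
  set g := fun t : ℝ => UplusVal (uO + t • d) N'
  have hstep : ∀ x Δ : ℝ, 0 ≤ Δ → g (x + Δ) - f x ≤ g (x + Δ + Δ) - f (x + Δ) := by
    intro x Δ hΔ
    have h1 := mul_VL_le_UplusVal_sub hN hne uO d (x + Δ) x
    have h2 := mul_VL_le_UplusVal_sub hN' hne' uO d (x + Δ) (x + Δ + Δ)
    have h3 := mul_le_mul_of_nonneg_left (hdom (uO + (x + Δ) • d)) hΔ
    simp only [f, g, add_sub_cancel_left] at h1 h2 ⊢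
    linarith
  intro a b hab
  have hmesh : ∀ k : ℕ, 0 < k →
      g (a + (b - a) / k) - f a ≤ g (b + (b - a) / k) - f b := by
    intro k hk
    set Δ := (b - a) / k with hΔdef
    have hΔ : 0 ≤ Δ := div_nonneg (sub_nonneg.2 hab) k.cast_nonneg
    have hmono : Monotone fun j : ℕ => g (a + j * Δ + Δ) - f (a + j * Δ) :=
      monotone_nat_of_le_succ fun j => by
        have e : a + ((j + 1 : ℕ) : ℝ) * Δ = a + j * Δ + Δ := by push_cast; ring
        rw [e]
        exact hstep _ Δ hΔ
    have hb : a + k * Δ = b := by rw [hΔdef]; field_simp; ring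
    simpa [hb] using hmono (Nat.zero_le k)
  have hΔ := tendsto_const_div_atTop_nhds_zero_nat (b - a)
  have hg := continuous_UplusVal_add_smul hN' uO d
  have hl : Tendsto (fun k : ℕ => g (a + (b - a) / k) - f a) atTop
      (𝓝 (g a - f a)) := by
    have := ((hg.comp (continuous_const_add a)).tendsto 0).comp hΔ
    simpa using this.sub_const (f a)
  have hr : Tendsto (fun k : ℕ => g (b + (b - a) / k) - f b) atTop
      (𝓝 (g b - f b)) := by
    have := ((hg.comp (continuous_const_add b)).tendsto 0).comp hΔ
    simpa using this.sub_const (f b)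
  exact le_of_tendsto_of_tendsto hl hr
    (eventually_atTop.2 ⟨1, fun k hk => hmesh k hk⟩)

lemma UplusVal_add_smul_ge (hN : IsCompact N) (hne : N.Nonempty) (uO e : Fin m → Fin n → ℝ)
    (t : ℝ) :
    t * UplusVal e N + UplusVal uO (MplusSet e N) ≤ UplusVal (uO + t • e) N := by
  obtain ⟨φ, hφ, hval⟩ := MplusSet_nonempty (isCompact_MplusSet hN e)
    (MplusSet_nonempty hN hne e) uO
  have := le_UplusVal hN (uO + t • e) hφ.1
  rw [linCSP_add_smul, hφ.2, hval] at this
  linarith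

/-- By compactness, a point whose `uO`-value exceeds the maximum over the `e`-face by `ε` has
`e`-value at least a fixed `δ > 0` below the top; for large `t` such points no longer compete. -/
lemma eventually_UplusVal_add_smul_le (hN : IsCompact N) (hne : N.Nonempty)
    (uO e : Fin m → Fin n → ℝ) {ε : ℝ} (hε : 0 < ε) :
    ∀ᶠ t in atTop,
      UplusVal (uO + t • e) N ≤ t * UplusVal e N + UplusVal uO (MplusSet e N) + ε := by
  set D := UplusVal e N
  set C := UplusVal uO (MplusSet e N)
  set K := {φ ∈ N | C + ε ≤ linCSP uO φ}
  have hK : IsCompact K :=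
    hN.of_isClosed_subset (hN.isClosed.inter (isClosed_le continuous_const (continuous_linCSP uO)))
      fun _ hφ => hφ.1
  have hgap : ∀ φ ∈ K, 0 < D - linCSP e φ := by
    intro φ hφ
    refine sub_pos.2 (lt_of_le_of_ne (le_UplusVal hN e hφ.1) fun heq => ?_)
    have := le_UplusVal (isCompact_MplusSet hN e) uO (⟨hφ.1, heq⟩ : φ ∈ MplusSet e N)
    linarith [hφ.2]
  obtain ⟨δ, hδ, hδK⟩ := hK.exists_forall_le'
    (continuous_const.sub (continuous_linCSP e)).continuousOn hgap
  filter_upwards [eventually_ge_atTop 0,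
    eventually_ge_atTop ((UplusVal uO N - C) / δ)] with t ht0 htδ
  refine UplusVal_le hne _ fun φ hφ => ?_
  rw [linCSP_add_smul]
  have hD : t * linCSP e φ ≤ t * D := mul_le_mul_of_nonneg_left (le_UplusVal hN e hφ) ht0
  by_cases hφK : C + ε ≤ linCSP uO φ
  · have hδt : UplusVal uO N - C ≤ t * δ := (div_le_iff₀ hδ).1 htδ
    have hδφ : t * δ ≤ t * (D - linCSP e φ) := mul_le_mul_of_nonneg_left (hδK φ ⟨hφ, hφK⟩) ht0
    have := le_UplusVal hN uO hφ
    linarith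
  · linarith

lemma UplusVal_le_of_monotone_sub (hN : IsCompact N) (hne : N.Nonempty) (hN' : IsCompact N')
    (hne' : N'.Nonempty) {uO e : Fin m → Fin n → ℝ}
    (hmono : Monotone fun t : ℝ => UplusVal (uO + t • e) N' - UplusVal (uO + t • e) N)
    (he : UplusVal e N' ≤ UplusVal e N)
    (hface : UplusVal uO (MplusSet e N') ≤ UplusVal uO (MplusSet e N)) :
    UplusVal uO N' ≤ UplusVal uO N := by
  refine le_of_forall_pos_le_add fun ε hε => ?_
  obtain ⟨t, ht0, ht⟩ := ((eventually_ge_atTop 0).and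
    (eventually_UplusVal_add_smul_le hN' hne' uO e hε)).exists
  have h0 := hmono ht0
  simp only [zero_smul, add_zero] at h0
  have hlow := UplusVal_add_smul_ge hN hne uO e t
  have := mul_le_mul_of_nonneg_left he ht0
  linarith

end SupportAlongLine

section ConvexCombinations

variable {ι E : Type*}

lemma eq_of_le_sum_mul {t : Finset ι} {w g : ι → ℝ} {b : ℝ} (hw₀ : ∀ i ∈ t, 0 ≤ w i)
    (hw₁ : ∑ i ∈ t, w i = 1) (hg : ∀ i ∈ t, g i ≤ b) (h : b ≤ ∑ i ∈ t, w i * g i) {i : ι}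
    (hi : i ∈ t) (hwi : w i ≠ 0) : g i = b := by
  have hsum : ∑ j ∈ t, w j * (b - g j) = 0 := by
    refine le_antisymm ?_ (sum_nonneg fun j hj => mul_nonneg (hw₀ j hj) (sub_nonneg.2 (hg j hj)))
    simp only [mul_sub, sum_sub_distrib, ← sum_mul, hw₁, one_mul]
    linarith
  have := (sum_eq_zero_iff_of_nonneg fun j hj =>
    mul_nonneg (hw₀ j hj) (sub_nonneg.2 (hg j hj))).1 hsum i hi
  linarith [(mul_eq_zero.1 this).resolve_left hwi]

lemma sum_mul_le_of_mem_stdSimplex [Fintype ι] {w g : ι → ℝ} (hw : w ∈ stdSimplex ℝ ι) {b : ℝ}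
    (hg : ∀ i, g i ≤ b) : ∑ i, w i * g i ≤ b :=
  calc ∑ i, w i * g i ≤ ∑ i, w i * b :=
        sum_le_sum fun i _ => mul_le_mul_of_nonneg_left (hg i) (hw.1 i)
    _ = b := by rw [← sum_mul, hw.2, one_mul]

lemma eq_single_of_le_sum_mul [Fintype ι] [DecidableEq ι] {w g : ι → ℝ}
    (hw : w ∈ stdSimplex ℝ ι) {p : ι} (hg : ∀ i ≠ p, g i < g p) (h : g p ≤ ∑ i, w i * g i) :
    w = Pi.single p 1 := by
  have hle : ∀ i ∈ univ, g i ≤ g p := fun i _ => by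
    rcases eq_or_ne i p with rfl | hi
    exacts [le_rfl, (hg i hi).le]
  have hzero : ∀ i ≠ p, w i = 0 := fun i hi => by
    by_contra hwi
    exact (hg i hi).ne (eq_of_le_sum_mul (fun i _ => hw.1 i) hw.2 hle h (mem_univ i) hwi)
  have hp : w p = 1 := by
    rw [← hw.2, sum_eq_single p fun i _ hi => hzero i hi]
    simp
  ext i
  rcases eq_or_ne i p with rfl | hi
  · simp [hp]
  · simp [hzero i hi, hi]

variable [AddCommGroup E] [Module ℝ E]

lemma mem_convexHull_sep_eq_of_le {s : Set E} {f : E → ℝ} (hf : IsLinearMap ℝ f) {b : ℝ}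
    (hs : ∀ y ∈ s, b ≤ f y) {x : E} (hx : x ∈ convexHull ℝ s) (hfx : f x = b) :
    x ∈ convexHull ℝ {y ∈ s | f y = b} := by
  classical
  rw [_root_.convexHull_eq] at hx
  obtain ⟨κ, t, w, z, hw₀, hw₁, hz, rfl⟩ := hx
  have hfz : -b ≤ ∑ i ∈ t, w i * -f (z i) := by
    rw [← hfx, Finset.centerMass_eq_of_sum_1 _ _ hw₁]
    have := map_sum hf.mk' (fun i => w i • z i) t
    simp only [IsLinearMap.mk'_apply, hf.map_smul, smul_eq_mul] at this
    simp [this]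
  rw [← Finset.centerMass_filter_ne_zero]
  refine Finset.centerMass_mem_convexHull _ (fun i hi => hw₀ i (mem_filter.1 hi).1)
    (by rw [sum_filter_ne_zero, hw₁]; exact one_pos) fun i hi => ?_
  obtain ⟨hit, hwi⟩ := mem_filter.1 hi
  exact ⟨hz i hit, neg_inj.1 <|
    eq_of_le_sum_mul hw₀ hw₁ (fun j hj => neg_le_neg (hs _ (hz j hj))) hfz hit hwi⟩

lemma mem_of_mem_convexHull_union {S G : Set E} {f : E → ℝ} (hf : IsLinearMap ℝ f) {b : ℝ}
    (hS : Convex ℝ S) (hSb : ∀ y ∈ S, b ≤ f y) (hGb : ∀ y ∈ G, b < f y) {x : E}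
    (hx : x ∈ convexHull ℝ (S ∪ G)) (hfx : f x = b) : x ∈ S :=
  convexHull_min (fun y hy => hy.1.resolve_right fun hyG => (hGb y hyG).ne' hy.2) hS
    (mem_convexHull_sep_eq_of_le hf (fun y hy => hy.elim (hSb y) fun h => (hGb y h).le) hx hfx)

lemma IsCompact.convexJoin [TopologicalSpace E] [IsTopologicalAddGroup E] [ContinuousSMul ℝ E]
    {s t : Set E} (hs : IsCompact s) (ht : IsCompact t) : IsCompact (_root_.convexJoin ℝ s t) := by
  have : _root_.convexJoin ℝ s t =
      (fun z : E × E × ℝ => AffineMap.lineMap z.1 z.2.1 z.2.2) '' s ×ˢ t ×ˢ Set.Icc 0 1 := by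
    ext x
    simp only [mem_convexJoin, segment_eq_image_lineMap, Set.mem_image, Set.mem_prod,
      Prod.exists]
    aesop
  rw [this]
  refine (hs.prod (ht.prod isCompact_Icc)).image ?_
  simp only [AffineMap.lineMap_apply_module]
  fun_prop

end ConvexCombinations

section Separation

variable {A B : Set (Fin m × Fin n → ℝ)}

lemma exists_linCSP_eq (f : StrongDual ℝ (Fin m × Fin n → ℝ)) :
    ∃ c : Fin m → Fin n → ℝ, ∀ φ, linCSP c φ = f φ := by
  refine ⟨fun i j => f (Pi.single (i, j) 1), fun φ => ?_⟩
  conv_rhs => rw [pi_eq_sum_univ' φ, map_sum]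
  simp [linCSP]

lemma exists_linCSP_separation (hB : Convex ℝ B) (hBc : IsClosed B) {x : Fin m × Fin n → ℝ}
    (hx : x ∉ B) :
    ∃ (c : Fin m → Fin n → ℝ) (b : ℝ), (∀ y ∈ B, linCSP c y < b) ∧ b < linCSP c x := by
  obtain ⟨f, b, hfB, hfx⟩ := geometric_hahn_banach_closed_point hB hBc hx
  obtain ⟨c, hc⟩ := exists_linCSP_eq f
  exact ⟨c, b, fun y hy => hc y ▸ hfB y hy, hc x ▸ hfx⟩

lemma subset_of_forall_UplusVal_le (hA : IsCompact A) (hB : Convex ℝ B) (hBc : IsClosed B)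
    (hBne : B.Nonempty) (h : ∀ c, UplusVal c A ≤ UplusVal c B) : A ⊆ B := by
  intro x hxA
  by_contra hxB
  obtain ⟨c, b, hcB, hcx⟩ := exists_linCSP_separation hB hBc hxB
  have := UplusVal_le hBne c fun y hy => (hcB y hy).le
  linarith [le_UplusVal hA c hxA, h c]

end Separation

section Menus

variable {M : Set (Fin m × Fin n → ℝ)} {u : Fin m → Fin n → ℝ}

lemma pureVec_eq_single {k : ℕ} (j : Fin k) : pureVec j = Pi.single j 1 := by
  ext j'
  simp [pureVec, Pi.single_apply]

lemma pureVec_mem_stdSimplex {k : ℕ} (j : Fin k) : pureVec j ∈ stdSimplex ℝ (Fin k) :=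
  pureVec_eq_single j ▸ single_mem_stdSimplex ℝ j

lemma IsMenu.isCompact (hM : IsMenu M) : IsCompact M :=
  (isCompact_stdSimplex ℝ _).of_isClosed_subset hM.1 hM.2.2.1

lemma IsMenu.nonempty [Nonempty (Fin m)] (hM : IsMenu M) : M.Nonempty := by
  obtain ⟨i⟩ := ‹Nonempty (Fin m)›
  obtain ⟨y, -, hy⟩ := hM.2.2.2 (pureVec i) (pureVec_mem_stdSimplex i)
  exact ⟨_, hy⟩

lemma BRL_nonempty [Nonempty (Fin n)] (u : Fin m → Fin n → ℝ) (x : Fin m → ℝ) :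
    (BRL u x).Nonempty := by
  obtain ⟨j, -, hj⟩ := exists_max_image univ (fun j => ∑ i, x i * u i j) univ_nonempty
  exact ⟨j, fun j' => hj j' (mem_univ j')⟩

lemma prodCSP_mem_stdSimplex {x : Fin m → ℝ} {y : Fin n → ℝ} (hx : x ∈ stdSimplex ℝ (Fin m))
    (hy : y ∈ stdSimplex ℝ (Fin n)) : prodCSP x y ∈ stdSimplex ℝ (Fin m × Fin n) :=
  ⟨fun p => mul_nonneg (hx.1 _) (hy.1 _), by
    simp [prodCSP, Fintype.sum_prod_type, ← mul_sum, hy.2, hx.2]⟩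

lemma linCSP_prodCSP (u : Fin m → Fin n → ℝ) (x : Fin m → ℝ) (y : Fin n → ℝ) :
    linCSP u (prodCSP x y) = ∑ j, y j * ∑ i, x i * u i j := by
  simp only [linCSP, prodCSP, Fintype.sum_prod_type, mul_sum]
  rw [sum_comm]
  exact sum_congr rfl fun _ _ => sum_congr rfl fun _ _ => by ring

lemma devCSP_prodCSP (u : Fin m → Fin n → ℝ) (x : Fin m → ℝ) {y : Fin n → ℝ}
    (hy : ∑ j, y j = 1) (j' : Fin n) : devCSP u (prodCSP x y) j' = ∑ i, x i * u i j' := by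
  simp only [devCSP, prodCSP, Fintype.sum_prod_type, mul_right_comm (x _), ← mul_sum,
    hy, mul_one]

lemma prodCSP_pureVec_mem_MNSR {x : Fin m → ℝ} (hx : x ∈ stdSimplex ℝ (Fin m)) {j : Fin n}
    (hj : j ∈ BRL u x) : prodCSP x (pureVec j) ∈ MNSR u := by
  refine ⟨prodCSP_mem_stdSimplex hx (pureVec_mem_stdSimplex j),
    fun j₁ j' => ?_⟩
  rcases eq_or_ne j₁ j with rfl | hj₁
  · simpa [prodCSP, pureVec] using hj j'
  · simp [prodCSP, pureVec, hj₁]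

lemma single_mem_MNSR {p : Fin m × Fin n} (hp : ∀ q ≠ p, u q.1 q.2 < u p.1 p.2) :
    Pi.single p 1 ∈ MNSR u := by
  have hBR : p.2 ∈ BRL u (pureVec p.1) := fun j' => by
    simp only [pureVec_eq_single, Pi.single_apply, ite_mul, one_mul, zero_mul, sum_ite_eq',
      mem_univ, if_true]
    rcases eq_or_ne j' p.2 with rfl | hj'
    exacts [le_rfl, (hp (p.1, j') fun h => hj' (congrArg Prod.snd h)).le]
  convert prodCSP_pureVec_mem_MNSR (pureVec_mem_stdSimplex p.1) hBR
  ext q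
  simp only [prodCSP, pureVec, Pi.single_apply, Prod.ext_iff]
  split_ifs <;> simp_all

lemma isClosed_MNSR : IsClosed (MNSR u) := by
  have : MNSR u = stdSimplex ℝ (Fin m × Fin n) ∩ ⋂ j, ⋂ j',
      {φ | ∑ i, φ (i, j) * u i j' ≤ ∑ i, φ (i, j) * u i j} := by
    ext φ
    simp [MNSR, NoSwapRegret]
  rw [this]
  exact (isClosed_stdSimplex ℝ _).inter (isClosed_iInter fun j => isClosed_iInter fun j' =>
    isClosed_le (by fun_prop) (by fun_prop))

lemma convex_MNSR : Convex ℝ (MNSR u) := by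
  intro φ hφ ψ hψ a b ha hb hab
  refine ⟨convex_stdSimplex ℝ _ hφ.1 hψ.1 ha hb hab, fun j j' => ?_⟩
  have key : ∀ k, ∑ i, (a • φ + b • ψ) (i, j) * u i k =
      a * ∑ i, φ (i, j) * u i k + b * ∑ i, ψ (i, j) * u i k := fun k => by
    simp only [Pi.add_apply, Pi.smul_apply, smul_eq_mul, mul_sum, ← sum_add_distrib]
    exact sum_congr rfl fun _ _ => by ring
  rw [key, key]
  exact add_le_add (mul_le_mul_of_nonneg_left (hφ.2 j j') ha)
    (mul_le_mul_of_nonneg_left (hψ.2 j j') hb)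

lemma isCompact_MNSR : IsCompact (MNSR u) :=
  (isCompact_stdSimplex ℝ _).of_isClosed_subset isClosed_MNSR fun _ hφ => hφ.1

lemma MNSR_nonempty [Nonempty (Fin m)] [Nonempty (Fin n)] : (MNSR u).Nonempty := by
  obtain ⟨i⟩ := ‹Nonempty (Fin m)›
  obtain ⟨j, hj⟩ := BRL_nonempty u (pureVec i)
  exact ⟨_, prodCSP_pureVec_mem_MNSR (pureVec_mem_stdSimplex i) hj⟩

lemma IsMenu.of_MNSR_subset [Nonempty (Fin n)] (hM : IsClosed M) (hconv : Convex ℝ M)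
    (hsimplex : M ⊆ stdSimplex ℝ (Fin m × Fin n)) (hNSR : MNSR u ⊆ M) : IsMenu M := by
  refine ⟨hM, hconv, hsimplex, fun x hx => ?_⟩
  obtain ⟨j, hj⟩ := BRL_nonempty u x
  exact ⟨pureVec j, pureVec_mem_stdSimplex j,
    hNSR (prodCSP_pureVec_mem_MNSR hx hj)⟩

end Menus

section NoRegretMenus

variable {M : Set (Fin m × Fin n → ℝ)} {u : Fin m → Fin n → ℝ}

/-- The menu's product response `x ⊗ y` is no-regret, which forces `y = e_j`. -/
lemma prodCSP_pureVec_mem_of_forall_lt (hM : IsMenu M) (hNR : M ⊆ MNR u) {x : Fin m → ℝ}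
    (hx : x ∈ stdSimplex ℝ (Fin m)) {j : Fin n}
    (hj : ∀ j' ≠ j, ∑ i, x i * u i j' < ∑ i, x i * u i j) : prodCSP x (pureVec j) ∈ M := by
  obtain ⟨y, hy, hyM⟩ := hM.2.2.2 x hx
  have hnr := (hNR hyM).2 j
  rw [devCSP_prodCSP u x hy.2, linCSP_prodCSP] at hnr
  rwa [pureVec_eq_single, ← eq_single_of_le_sum_mul hy hj hnr]

/-- By (A2), `j` is the strict best response at some `x'`, hence along the half-open segment from
`x'` to `x`; pass to the limit at `x` using closedness. -/
lemma prodCSP_pureVec_mem_of_mem_BRL (hA2 : A2cond u) (hM : IsMenu M) (hNR : M ⊆ MNR u)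
    {x : Fin m → ℝ} (hx : x ∈ stdSimplex ℝ (Fin m)) {j : Fin n} (hj : j ∈ BRL u x) :
    prodCSP x (pureVec j) ∈ M := by
  obtain ⟨x', hx', hBR⟩ := hA2 j ⟨x, hx, hj⟩
  have hx'j : ∀ j' ≠ j, ∑ i, x' i * u i j' < ∑ i, x' i * u i j := by
    intro j' hj'
    have hj'BR : j' ∉ BRL u x' := by simpa [hBR] using hj'
    simp only [BRL, Set.mem_ofPred_eq, not_forall, not_le] at hj'BR
    obtain ⟨j₁, hj₁⟩ := hj'BR
    exact hj₁.trans_le ((hBR.symm ▸ rfl : j ∈ BRL u x') j₁)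
  set xt : ℝ → Fin m → ℝ := fun t => (1 - t) • x' + t • x
  have hxt : ∀ t ∈ Set.Ioo (0 : ℝ) 1, prodCSP (xt t) (pureVec j) ∈ M := by
    rintro t ⟨ht0, ht1⟩
    refine prodCSP_pureVec_mem_of_forall_lt hM hNR
      (convex_stdSimplex ℝ _ hx' hx (by linarith) ht0.le (by ring)) fun j' hj' => ?_
    have key : ∀ k, ∑ i, xt t i * u i k = (1 - t) * ∑ i, x' i * u i k + t * ∑ i, x i * u i k :=
      fun k => by
        simp only [xt, Pi.add_apply, Pi.smul_apply, smul_eq_mul, add_mul, sum_add_distrib,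
          mul_assoc, ← mul_sum]
    rw [key, key]
    exact add_lt_add_of_lt_of_le (mul_lt_mul_of_pos_left (hx'j j' hj') (by linarith))
      (mul_le_mul_of_nonneg_left (hj j') ht0.le)
  have hcont : Continuous fun t => prodCSP (xt t) (pureVec j) := by
    refine continuous_pi fun p => ?_
    simp only [prodCSP, xt, Pi.add_apply, Pi.smul_apply, smul_eq_mul]
    fun_prop
  have hlim := (hcont.tendsto 1).mono_left (nhdsWithin_le_nhds (s := Set.Iio 1))
  simp only [xt, sub_self, zero_smul, zero_add, one_smul] at hlim
  exact hM.1.mem_of_tendsto hlim (mem_of_superset (Ioo_mem_nhdsLT zero_lt_one) hxt)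

/-- A no-swap-regret CSP is the convex combination of its normalized columns `x^j ⊗ e_j`, and
`j` is a best response to `x^j`. -/
lemma MNSR_subset_of_isMenu (hA2 : A2cond u) (hM : IsMenu M) (hNR : M ⊆ MNR u) :
    MNSR u ⊆ M := by
  classical
  intro φ hφ
  set w : Fin n → ℝ := fun j => ∑ i, φ (i, j)
  set z : Fin n → Fin m × Fin n → ℝ := fun j => prodCSP (fun i => φ (i, j) / w j) (pureVec j)
  have hw₀ : ∀ j, 0 ≤ w j := fun j => sum_nonneg fun i _ => hφ.1.1 (i, j)
  have hzM : ∀ j ∈ univ.filter (fun j => w j ≠ 0), z j ∈ M := by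
    intro j hj
    have hwj := (mem_filter.1 hj).2
    refine prodCSP_pureVec_mem_of_mem_BRL hA2 hM hNR
      ⟨fun i => div_nonneg (hφ.1.1 _) (hw₀ j), by rw [← sum_div, div_self hwj]⟩ fun j' => ?_
    simp only [div_mul_eq_mul_div, ← sum_div]
    exact div_le_div_of_nonneg_right (hφ.2 j j') (hw₀ j)
  have hφz : φ = ∑ j ∈ univ.filter (fun j => w j ≠ 0), w j • z j := by
    rw [sum_filter_of_ne fun j _ h => left_ne_zero_of_smul h]
    ext ⟨i, j⟩
    simp only [Finset.sum_apply, Pi.smul_apply, smul_eq_mul, z, prodCSP, pureVec, mul_ite, mul_one,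
      mul_zero, sum_ite_eq, mem_univ, if_true]
    by_cases hwj : w j = 0
    · rw [hwj, zero_mul]
      exact (sum_eq_zero_iff_of_nonneg fun i _ => hφ.1.1 (i, j)).1 hwj i (mem_univ i)
    · field_simp
  rw [hφz]
  refine hM.2.1.sum_mem (fun j _ => hw₀ j) ?_ hzM
  rw [sum_filter_ne_zero]
  have := hφ.1.2
  rwa [Fintype.sum_prod_type_right] at this

end NoRegretMenus

section Comparison

variable {N N' : Set (Fin m × Fin n → ℝ)} {d : Fin m → Fin n → ℝ}

lemma subset_of_VL_le_of_MplusSet_subset (hN : IsCompact N) (hNc : Convex ℝ N)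
    (hne : N.Nonempty) (hN' : IsCompact N') (hne' : N'.Nonempty)
    (hdom : ∀ c, VL d c N ≤ VL d c N') (htop : UplusVal d N' ≤ UplusVal d N)
    (hface : MplusSet d N' ⊆ MplusSet d N) : N' ⊆ N :=
  subset_of_forall_UplusVal_le hN' hNc hN.isClosed hne fun uO =>
    UplusVal_le_of_monotone_sub hN hne hN' hne'
      (monotone_UplusVal_sub_of_VL_le hN hne hN' hne' hdom uO) htop (UplusVal_mono (isCompact_MplusSet hN d) (MplusSet_nonempty hN' hne' d) hface uO)

lemma subset_of_VL_le_of_MminusSet_subset (hN : IsCompact N) (hne : N.Nonempty)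
    (hN' : IsCompact N') (hN'c : Convex ℝ N') (hne' : N'.Nonempty)
    (hdom : ∀ c, VL d c N ≤ VL d c N') (hbot : UminusVal d N' ≤ UminusVal d N)
    (hface : MminusSet d N ⊆ MminusSet d N') : N ⊆ N' := by
  refine subset_of_forall_UplusVal_le hN hN'c hN'.isClosed hne' fun uO => ?_
  refine UplusVal_le_of_monotone_sub (e := -d) hN' hne' hN hne (fun a b hab => ?_) ?_ ?_
  · have := monotone_UplusVal_sub_of_VL_le hN hne hN' hne' hdom uO (neg_le_neg hab)
    simp only [smul_neg, ← neg_smul] at this ⊢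
    linarith
  · rwa [UplusVal_neg, UplusVal_neg, neg_le_neg_iff]
  · rw [MplusSet_neg, MplusSet_neg]
    exact UplusVal_mono (isCompact_MminusSet hN' d) (MminusSet_nonempty hN hne d) hface uO

end Comparison

section UniqueMaximum

variable {uL : Fin m → Fin n → ℝ} {p : Fin m × Fin n} (hp : ∀ q ≠ p, uL q.1 q.2 < uL p.1 p.2)
include hp

lemma linCSP_le_of_forall_lt {φ : Fin m × Fin n → ℝ} (hφ : φ ∈ stdSimplex ℝ (Fin m × Fin n)) :
    linCSP uL φ ≤ uL p.1 p.2 :=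
  sum_mul_le_of_mem_stdSimplex hφ fun q => by
    rcases eq_or_ne q p with rfl | hq
    exacts [le_rfl, (hp q hq).le]

lemma linCSP_lt_of_ne_single {φ : Fin m × Fin n → ℝ} (hφ : φ ∈ stdSimplex ℝ (Fin m × Fin n))
    (hne : φ ≠ Pi.single p 1) : linCSP uL φ < uL p.1 p.2 :=
  (linCSP_le_of_forall_lt hp hφ).lt_of_ne fun h => hne (eq_single_of_le_sum_mul hφ hp h.ge)

lemma MplusSet_eq_singleton {N : Set (Fin m × Fin n → ℝ)} (hN : IsCompact N) (hne : N.Nonempty)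
    (hsimplex : N ⊆ stdSimplex ℝ (Fin m × Fin n)) (htop : uL p.1 p.2 ≤ UplusVal uL N) :
    MplusSet uL N = {Pi.single p 1} := by
  have hsub : MplusSet uL N ⊆ {Pi.single p 1} := fun φ hφ =>
    eq_single_of_le_sum_mul (hsimplex hφ.1) hp (htop.trans hφ.2.ge)
  obtain ⟨φ, hφ⟩ := MplusSet_nonempty hN hne uL
  exact hsub.antisymm (Set.singleton_subset_iff.2 (hsub hφ ▸ hφ))

end UniqueMaximum

section Sufficiency

variable {uL : Fin m → Fin n → ℝ} {M : Set (Fin m × Fin n → ℝ)}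

theorem paretoOptimal_of_MminusSet_eq [Nonempty (Fin m)] {p : Fin m × Fin n}
    (hp : ∀ q ≠ p, uL q.1 q.2 < uL p.1 p.2) (hA2 : A2cond uL) (hM : IsMenu M)
    (hNR : M ⊆ MNR uL) (hmin : MminusSet uL M = MminusSet uL (MNSR uL)) :
    ParetoOptimal uL M := by
  refine ⟨hM, fun M' hM' ⟨hdom, uO, hlt⟩ => (lt_irrefl (VL uL uO M) ?_)⟩
  have hMc := hM.isCompact
  have hMne := hM.nonempty
  have hM'c := hM'.isCompact
  have hM'ne := hM'.nonempty
  have hpM : Pi.single p 1 ∈ M := MNSR_subset_of_isMenu hA2 hM hNR (single_mem_MNSR hp)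
  have htopM : uL p.1 p.2 ≤ UplusVal uL M := linCSP_single uL p ▸ le_UplusVal hMc uL hpM
  have htop : UplusVal uL M ≤ UplusVal uL M' := by
    simpa only [VL_self hMc hMne, VL_self hM'c hM'ne] using hdom uL
  have hM'M : M' ⊆ M := by
    refine subset_of_VL_le_of_MplusSet_subset hMc hM.2.1 hMne hM'c hM'ne hdom
      (UplusVal_le hM'ne uL fun φ hφ => (linCSP_le_of_forall_lt hp (hM'.2.2.1 hφ)).trans htopM) ?_
    rw [MplusSet_eq_singleton hp hMc hMne hM.2.2.1 htopM,
      MplusSet_eq_singleton hp hM'c hM'ne hM'.2.2.1 (htopM.trans htop)]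
  have hNSR' : MNSR uL ⊆ M' := MNSR_subset_of_isMenu hA2 hM' (hM'M.trans hNR)
  have hMinus : MminusSet uL M ⊆ M' := fun φ hφ => hNSR' (hmin ▸ hφ).1
  have hbot : UminusVal uL M' ≤ UminusVal uL M := by
    obtain ⟨φ, hφ⟩ := MminusSet_nonempty hMc hMne uL
    exact hφ.2 ▸ UminusVal_le hM'c uL (hMinus hφ)
  have hbot' : UminusVal uL M ≤ UminusVal uL M' := by
    simpa only [VL_neg_self hMc hMne, VL_neg_self hM'c hM'ne] using hdom (-uL)
  have hMM' : M ⊆ M' := subset_of_VL_le_of_MminusSet_subset hMc hMne hM'c hM'.2.1 hM'ne hdom hbot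
    fun φ hφ => ⟨hMinus hφ, hφ.2.trans (hbot.antisymm hbot').symm⟩
  rwa [hM'M.antisymm hMM'] at hlt

end Sufficiency

section Necessity

variable {uL : Fin m → Fin n → ℝ} {M M' : Set (Fin m × Fin n → ℝ)}

lemma exists_mem_MplusSet_linCSP_eq_VL_of_eq_convexHull (hM : IsCompact M) (hne : M.Nonempty)
    {s : Set (Fin m × Fin n → ℝ)} (hs : M = convexHull ℝ s) (uL uO : Fin m → Fin n → ℝ) :
    ∃ w ∈ s, w ∈ MplusSet uO M ∧ linCSP uL w = VL uL uO M := by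
  obtain ⟨φ, hφ, hval⟩ := exists_mem_MplusSet_linCSP_eq_VL hM hne uL uO
  have hsM : s ⊆ M := hs ▸ subset_convexHull ℝ s
  have hface := mem_convexHull_sep_eq_of_le (isLinearMap_linCSP (-uO)) (b := -UplusVal uO M)
    (fun y hy => by rw [linCSP_neg]; exact neg_le_neg (le_UplusVal hM uO (hsM hy)))
    (hs ▸ hφ.1) (by rw [linCSP_neg, hφ.2])
  obtain ⟨w, ⟨hws, hwval⟩, hw⟩ :=
    ((isLinearMap_linCSP uL).mk'.convexOn convex_univ).exists_ge_of_mem_convexHull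
      (Set.subset_univ _) hface
  rw [linCSP_neg, neg_inj] at hwval
  have hwM : w ∈ MplusSet uO M := ⟨hsM hws, hwval⟩
  exact ⟨w, hws, hwM, le_antisymm (linCSP_le_VL hM uL hwM) (hval ▸ hw)⟩

lemma linCSP_le_VL_of_subset (hM : IsCompact M) (hM' : IsCompact M') (hne' : M'.Nonempty)
    (hM'M : M' ⊆ M) {cm : ℝ} (hlb : ∀ ψ ∈ M', cm ≤ linCSP uL ψ) {uO : Fin m → Fin n → ℝ}
    {φ : Fin m × Fin n → ℝ} (hφ : φ ∈ MplusSet uO M) (hφM' : cm < linCSP uL φ → φ ∈ M') :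
    linCSP uL φ ≤ VL uL uO M' := by
  by_cases hcm : cm < linCSP uL φ
  · refine linCSP_le_VL hM' uL ((mem_MplusSet_iff hM').2 ⟨hφM' hcm, fun ψ hψ => ?_⟩)
    exact ((mem_MplusSet_iff hM).1 hφ).2 ψ (hM'M hψ)
  · obtain ⟨ψ, hψ, hval⟩ := exists_mem_MplusSet_linCSP_eq_VL hM' hne' uL uO
    linarith [hlb ψ hψ.1]

lemma exists_paretoDominates_of_UminusVal_lt [Nonempty (Fin m)] [Nonempty (Fin n)]
    (hA2 : A2cond uL) (hM : IsMenu M) (hNR : M ⊆ MNR uL)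
    (hlt : UminusVal uL M < UminusVal uL (MNSR uL)) :
    ∃ M', IsMenu M' ∧ ParetoDominates uL M' M := by
  set cm := UminusVal uL (MNSR uL)
  set M' := M ∩ {φ | cm ≤ linCSP uL φ}
  have hNSR' : MNSR uL ⊆ M' := fun φ hφ =>
    ⟨MNSR_subset_of_isMenu hA2 hM hNR hφ, UminusVal_le isCompact_MNSR uL hφ⟩
  have hM' : IsMenu M' := IsMenu.of_MNSR_subset
    (hM.1.inter (isClosed_le continuous_const (continuous_linCSP uL)))
    (hM.2.1.inter (convex_halfSpace_ge (isLinearMap_linCSP uL) cm))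
    (Set.inter_subset_left.trans hM.2.2.1) hNSR'
  have hMc := hM.isCompact
  have hM'c := hM'.isCompact
  refine ⟨M', hM', fun uO => ?_, -uL, ?_⟩
  · obtain ⟨φ, hφ, hval⟩ := exists_mem_MplusSet_linCSP_eq_VL hMc hM.nonempty uL uO
    exact hval ▸ linCSP_le_VL_of_subset hMc hM'c hM'.nonempty Set.inter_subset_left
      (fun ψ hψ => hψ.2) hφ fun h => ⟨hφ.1, h.le⟩
  · obtain ⟨φ, hφ⟩ := MminusSet_nonempty hM'c hM'.nonempty uL
    rw [VL_neg_self hMc hM.nonempty, VL_neg_self hM'c hM'.nonempty, ← hφ.2]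
    exact hlt.trans_le hφ.1.2

/-- Every optimizer payoff is answered in `M` by a vertex, which survives in `M'` unless it is at
the bottom level, so nothing is lost. Against `uO`, `M` ends at the bottom level while `M'`
cannot: its bottom is `M_NSR⁻`, and `ψ` beats every point there. -/
lemma exists_paretoDominates_of_lift [Nonempty (Fin m)] [Nonempty (Fin n)] (hM : IsMenu M)
    {F : Set (Fin m × Fin n → ℝ)} (hF : F.Finite) (hMF : M = convexHull ℝ F)
    (hNSR : MNSR uL ⊆ M) (hU : UminusVal uL M = UminusVal uL (MNSR uL))
    {ψ φ₀ : Fin m × Fin n → ℝ} {uO : Fin m → Fin n → ℝ} (hψM : ψ ∈ M)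
    (hψ : UminusVal uL M < linCSP uL ψ) (hφ₀ : φ₀ ∈ M)
    (hF_lt : ∀ w ∈ F, UminusVal uL M < linCSP uL w → linCSP uO w < linCSP uO φ₀)
    (hψ_gt : ∀ a ∈ MminusSet uL (MNSR uL), linCSP uO a < linCSP uO ψ) :
    ∃ M', IsMenu M' ∧ ParetoDominates uL M' M := by
  set cm := UminusVal uL M
  set G := insert ψ {w ∈ F | cm < linCSP uL w}
  set M' := convexHull ℝ (MNSR uL ∪ G) with hM'_def
  have hMc := hM.isCompact
  have hGM : G ⊆ M := Set.insert_subset hψM fun w hw => hMF ▸ subset_convexHull ℝ F hw.1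
  have hGlt : ∀ w ∈ G, cm < linCSP uL w := by
    rintro w (rfl | hw)
    exacts [hψ, hw.2]
  have hNSRlb : ∀ a ∈ MNSR uL, cm ≤ linCSP uL a := fun a ha =>
    hU ▸ UminusVal_le isCompact_MNSR uL ha
  have hGM' : G ⊆ M' := Set.subset_union_right.trans (subset_convexHull ℝ _)
  have hM'M : M' ⊆ M := convexHull_min (Set.union_subset hNSR hGM) hM.2.1
  have hM'c : IsCompact M' := by
    rw [hM'_def, convexHull_union MNSR_nonempty (Set.insert_nonempty _ _),
      convex_MNSR.convexHull_eq]
    exact isCompact_MNSR.convexJoin (((hF.sep _).insert ψ).isCompact_convexHull ℝ)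
  have hM' : IsMenu M' := IsMenu.of_MNSR_subset hM'c.isClosed (convex_convexHull ℝ _)
    (hM'M.trans hM.2.2.1) (Set.subset_union_left.trans (subset_convexHull ℝ _))
  have hlb : ∀ φ ∈ M', cm ≤ linCSP uL φ := fun φ hφ =>
    convexHull_min (Set.union_subset hNSRlb fun w hw => (hGlt w hw).le)
      (convex_halfSpace_ge (isLinearMap_linCSP uL) cm) hφ
  have hbottom : ∀ φ ∈ M', linCSP uL φ ≤ cm → φ ∈ MminusSet uL (MNSR uL) := fun φ hφ hle =>
    have heq := le_antisymm hle (hlb φ hφ)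
    ⟨mem_of_mem_convexHull_union (isLinearMap_linCSP uL) convex_MNSR hNSRlb hGlt hφ heq,
      heq.trans hU⟩
  refine ⟨M', hM', fun uO' => ?_, uO, ?_⟩
  · obtain ⟨w, hwF, hw, hval⟩ :=
      exists_mem_MplusSet_linCSP_eq_VL_of_eq_convexHull hMc hM.nonempty hMF uL uO'
    exact hval ▸ linCSP_le_VL_of_subset hMc hM'c hM'.nonempty hM'M hlb hw
      fun h => hGM' (Or.inr ⟨hwF, h⟩)
  · obtain ⟨w, hwF, hw, hval⟩ :=
      exists_mem_MplusSet_linCSP_eq_VL_of_eq_convexHull hMc hM.nonempty hMF uL uO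
    have hVL : VL uL uO M ≤ cm := hval ▸ not_lt.1 fun h =>
      (hF_lt w hwF h).not_ge (((mem_MplusSet_iff hMc).1 hw).2 φ₀ hφ₀)
    obtain ⟨χ, hχ, hχval⟩ := exists_mem_MplusSet_linCSP_eq_VL hM'c hM'.nonempty uL uO
    refine hVL.trans_lt (hχval ▸ not_le.1 fun hle => ?_)
    exact (hψ_gt χ (hbottom χ hχ.1 hle)).not_ge
      (((mem_MplusSet_iff hM'c).1 hχ).2 ψ (hGM' (Set.mem_insert ψ _)))

/-- Some vertex `φ₀` of `M` at the bottom level lies outside `M_NSR⁻`; separate it from `M_NSR⁻`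
by `cf`, lift it slightly towards `φ⁺`, and let the optimizer play `cf - K uL` with `K` so large
that no vertex above the bottom beats `φ₀`. -/
lemma exists_paretoDominates_of_MminusSet_ne [Nonempty (Fin m)] [Nonempty (Fin n)]
    {p : Fin m × Fin n} (hp : ∀ q ≠ p, uL q.1 q.2 < uL p.1 p.2) (hA2 : A2cond uL)
    (hM : IsMenu M) (hNR : M ⊆ MNR uL) {F : Set (Fin m × Fin n → ℝ)} (hF : F.Finite)
    (hMF : M = convexHull ℝ F) (hU : UminusVal uL M = UminusVal uL (MNSR uL))
    (hne : MminusSet uL M ≠ MminusSet uL (MNSR uL)) :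
    ∃ M', IsMenu M' ∧ ParetoDominates uL M' M := by
  set cm := UminusVal uL M
  have hMc := hM.isCompact
  have hFM : F ⊆ M := hMF ▸ subset_convexHull ℝ F
  have hNSR := MNSR_subset_of_isMenu hA2 hM hNR
  obtain ⟨φ₀, hφ₀F, hφ₀val, hφ₀⟩ :
      ∃ φ₀ ∈ F, linCSP uL φ₀ = cm ∧ φ₀ ∉ MminusSet uL (MNSR uL) := by
    by_contra! h
    refine hne (subset_antisymm (fun φ hφ => ?_) fun a ha => ⟨hNSR ha.1, ha.2.trans hU.symm⟩)
    exact convexHull_min (fun y hy => h y hy.1 hy.2) (convex_MminusSet convex_MNSR uL)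
      (mem_convexHull_sep_eq_of_le (isLinearMap_linCSP uL)
        (fun y hy => UminusVal_le hMc uL (hFM hy)) (hMF ▸ hφ.1) hφ.2)
  obtain ⟨cf, b, hcf, hbφ₀⟩ := exists_linCSP_separation (convex_MminusSet convex_MNSR uL)
    (isCompact_MminusSet isCompact_MNSR uL).isClosed hφ₀
  have hpM : Pi.single p 1 ∈ M := hNSR (single_mem_MNSR hp)
  have hΔ : cm < uL p.1 p.2 := hφ₀val ▸ linCSP_lt_of_ne_single hp (hM.2.2.1 (hFM hφ₀F))
    fun h => hφ₀ ⟨h ▸ single_mem_MNSR hp, hφ₀val.trans hU⟩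
  obtain ⟨K, hK⟩ : ∃ K : ℝ, ∀ w ∈ F, cm < linCSP uL w →
      linCSP cf w - linCSP cf φ₀ < K * (linCSP uL w - cm) := by
    refine ((eventually_all_finite (l := atTop) hF).2 fun w _ => ?_).exists
    by_cases h : cm < linCSP uL w
    · filter_upwards [eventually_gt_atTop ((linCSP cf w - linCSP cf φ₀) /
        (linCSP uL w - cm))] with K hK _
      exact (div_lt_iff₀ (sub_pos.2 h)).1 hK
    · exact Eventually.of_forall fun _ h' => absurd h' h
  obtain ⟨ε, hε₀, hε₁, hεC⟩ : ∃ ε : ℝ, 0 < ε ∧ ε ≤ 1 ∧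
      ε * (linCSP cf φ₀ - cf p.1 p.2 + K * (uL p.1 p.2 - cm)) < linCSP cf φ₀ - b := by
    set C := linCSP cf φ₀ - cf p.1 p.2 + K * (uL p.1 p.2 - cm)
    obtain ⟨c, hc₀, hc⟩ := exists_pos_mul_lt (sub_pos.2 hbφ₀) C
    refine ⟨min c 1, lt_min hc₀ one_pos, min_le_right _ _, ?_⟩
    rcases le_or_gt C 0 with hC | hC
    · exact (mul_nonpos_of_nonneg_of_nonpos (lt_min hc₀ one_pos).le hC).trans_lt
        (sub_pos.2 hbφ₀)
    · exact (mul_le_mul_of_nonneg_right (min_le_left c 1) hC.le).trans_lt (mul_comm C c ▸ hc)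
  refine exists_paretoDominates_of_lift hM hF hMF hNSR hU
    (ψ := (1 - ε) • φ₀ + ε • Pi.single p 1) (uO := cf + (-K) • uL)
    (hM.2.1 (hFM hφ₀F) hpM (by linarith) hε₀.le (by ring)) ?_ (hFM hφ₀F) ?_ ?_
  · rw [linCSP_smul_add_smul, hφ₀val, linCSP_single]
    nlinarith
  · intro w hw hlt
    simp only [linCSP_add_smul, hφ₀val]
    linarith [hK w hw hlt]
  · intro a ha
    have hcm : linCSP uL a = cm := ha.2.trans hU.symm
    simp only [linCSP_smul_add_smul, linCSP_add_smul, hφ₀val, hcm, linCSP_single, Pi.add_apply,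
      Pi.smul_apply, smul_eq_mul]
    linarith [hcf a ha]

end Necessity

end

theorem pareto_optimal_characterization_polytopal_no_regret_general
    (m n : ℕ)
    (uL : Fin m → Fin n → ℝ)
    (hA1 : ∃ p : Fin m × Fin n, ∀ q : Fin m × Fin n, q ≠ p → uL q.1 q.2 < uL p.1 p.2)
    (hA2 : A2cond uL)
    (M : Set (Fin m × Fin n → ℝ)) (hM : IsMenu M)
    (hpoly : ∃ F : Finset (Fin m × Fin n → ℝ), M = convexHull ℝ (F : Set (Fin m × Fin n → ℝ)))
    (hsub : M ⊆ MNR uL) :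
    ParetoOptimal uL M ↔ MminusSet uL M = MminusSet uL (MNSR uL) := by
  obtain ⟨p, hp⟩ := hA1
  have : Nonempty (Fin m) := ⟨p.1⟩
  have : Nonempty (Fin n) := ⟨p.2⟩
  refine ⟨fun hPO => ?_, paretoOptimal_of_MminusSet_eq hp hA2 hM hsub⟩
  by_contra hne
  obtain ⟨φ, hφ⟩ := MminusSet_nonempty isCompact_MNSR MNSR_nonempty uL
  have hle : UminusVal uL M ≤ UminusVal uL (MNSR uL) :=
    hφ.2 ▸ UminusVal_le hM.isCompact uL (MNSR_subset_of_isMenu hA2 hM hsub hφ.1)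
  obtain ⟨M', hM', hdom⟩ := hle.lt_or_eq.elim
    (exists_paretoDominates_of_UminusVal_lt hA2 hM hsub) fun hU => by
      obtain ⟨F, hF⟩ := hpoly
      exact exists_paretoDominates_of_MminusSet_ne hp hA2 hM hsub F.finite_toSet hF hU hne
  exact hPO.2 M' hM' hdom

/-- Assume (A1) and (A2). A polytopal menu contained in the no-regret menu
is Pareto-optimal iff its set of learner-minimizing points equals that of the
no-swap-regret menu. -/
theorem pareto_optimal_characterization_polytopal_no_regret
    (m n : ℕ) (hm : 0 < m) (hn : 0 < n)
    (uL : Fin m → Fin n → ℝ) (hbound : ∀ i j, uL i j ∈ Set.Icc (-1 : ℝ) 1)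
    (hA1 : ∃ p : Fin m × Fin n, ∀ q : Fin m × Fin n, q ≠ p → uL q.1 q.2 < uL p.1 p.2)
    (hA2 : A2cond uL)
    (M : Set (Fin m × Fin n → ℝ)) (hM : IsMenu M)
    (hpoly : ∃ F : Finset (Fin m × Fin n → ℝ), M = convexHull ℝ (F : Set (Fin m × Fin n → ℝ)))
    (hsub : M ⊆ MNR uL) :
    ParetoOptimal uL M ↔ MminusSet uL M = MminusSet uL (MNSR uL) :=
  pareto_optimal_characterization_polytopal_no_regret_general m n uL hA1 hA2 M hM hpoly hsub
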